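/- If U is a simple extension of a standard finite tree T, then for all a and b in T, the meet of a and b computed in T equals the meet of a and b computed in U. -/

import Mathlib

noncomputable section
open scoped Classical

namespace AKST

/-- The first uncountable ordinal. -/
def ω1 : Ordinal := (Cardinal.aleph 1).ord

/-- The second uncountable ordinal. -/
def ω2 : Ordinal := (Cardinal.aleph 2).ord

/-- The height of a countable ordinal `γ`: the unique `α` with `ω·α ≤ γ < ω·(α+1)`. -/
def ht (γ : Ordinal) : Ordinal := γ / Ordinal.omega0

/-- A standard finite tree. -/
structure SFT where
  elems : Finset Ordinal
  lt : Ordinal → Ordinal → Prop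
  zero_mem : 0 ∈ elems
  mem_ok : ∀ x ∈ elems, x = 0 ∨ (Ordinal.omega0 ≤ x ∧ x < ω1)
  lt_mem : ∀ {x y}, lt x y → x ∈ elems ∧ y ∈ elems
  lt_trans' : ∀ {x y z}, lt x y → lt y z → lt x z
  lt_irrefl' : ∀ x, ¬ lt x x
  pred_linear : ∀ {x y z}, lt y x → lt z x → lt y z ∨ y = z ∨ lt z y
  lt_ht : ∀ {x y}, lt x y → ht x < ht y
  pred_level : ∀ x ∈ elems, ∀ α, (∃ z ∈ elems, ht z = α) → α < ht x →
    ∃ y ∈ elems, ht y = α ∧ lt y x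

namespace SFT

/-- The non-strict tree order. -/
def le (T : SFT) (x y : Ordinal) : Prop := T.lt x y ∨ (x = y ∧ x ∈ T.elems)

/-- `ht[T]`: the set of nonzero heights of elements of `T`. -/
def heights (T : SFT) : Set Ordinal := {α | α ≠ 0 ∧ ∃ x ∈ T.elems, ht x = α}

/-- Level `α` of `T`. -/
def level (T : SFT) (α : Ordinal) : Set Ordinal := {x | x ∈ T.elems ∧ ht x = α}

/-- `max(ht[T])`. -/
def maxHeight (T : SFT) : Ordinal := sSup T.heights

/-- The least element of `ht[T]` greater than `α`. -/
def minAbove (T : SFT) (α : Ordinal) : Ordinal := sInf {β | β ∈ T.heights ∧ α < β}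

/-- The drop-down `x↾α`: the unique element of `T` of height `α` below `x`. -/
def drop (T : SFT) (α x : Ordinal) : Ordinal :=
  if h : ∃ y, y ∈ T.elems ∧ ht y = α ∧ T.lt y x then h.choose else 0

/-- `z` is the meet of `x` and `y` in `T`. -/
def isMeet (T : SFT) (x y z : Ordinal) : Prop :=
  T.le z x ∧ T.le z y ∧ ∀ w, T.le w x → T.le w y → T.le w z

/-- The meet `x ∧_T y`. -/
def meet (T : SFT) (x y : Ordinal) : Ordinal :=
  if h : ∃ z, T.isMeet x y z then h.choose else 0

/-- `U` extends `T`. -/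
def Ext (T U : SFT) : Prop :=
  (↑T.elems : Set Ordinal) ⊆ ↑U.elems ∧ ∀ {x y}, T.lt x y → U.lt x y

/-- `X` has unique drop-downs to `α` in `T`. -/
def UniqueDrops (T : SFT) (α : Ordinal) (X : Set Ordinal) : Prop :=
  ∀ x ∈ X, ∀ y ∈ X, T.drop α x = T.drop α y → x = y

/-- `U` is a simple extension of `T`. -/
def SimpleExt (U T : SFT) : Prop :=
  Ext T U ∧
  (∀ x ∈ U.elems, x ∉ T.elems → ht x ∉ T.heights) ∧
  (∀ α, α ∈ U.heights → α ∉ T.heights → α < T.maxHeight →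
     U.UniqueDrops α (T.level (T.minAbove α)))

/-- `x` and `y` are incomparable in `T`. -/
def Incomp (T : SFT) (x y : Ordinal) : Prop := x ≠ y ∧ ¬ T.lt x y ∧ ¬ T.lt y x

/-- `T` is normal: every element has successors at every higher occupied level. -/
def Normal (T : SFT) : Prop :=
  ∀ x ∈ T.elems, ∀ γ ∈ T.heights, ht x < γ → ∃ y ∈ T.elems, ht y = γ ∧ T.lt x y

end SFT

/-! Partial functions on a tree, represented by their graphs. -/

def dom (f : Set (Ordinal × Ordinal)) : Set Ordinal := {x | ∃ y, (x, y) ∈ f}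

def ran (f : Set (Ordinal × Ordinal)) : Set Ordinal := {y | ∃ x, (x, y) ∈ f}

/-- The graph is single-valued. -/
def FuncGraph (f : Set (Ordinal × Ordinal)) : Prop :=
  ∀ {x y y'}, (x, y) ∈ f → (x, y') ∈ f → y = y'

/-- The graph is injective. -/
def InjGraph (f : Set (Ordinal × Ordinal)) : Prop :=
  ∀ {x x' y}, (x, y) ∈ f → (x', y) ∈ f → x = x'

/-- The graph is a partial function from `T` to `T`. -/
def Carr (T : SFT) (f : Set (Ordinal × Ordinal)) : Prop :=
  ∀ p ∈ f, p.1 ∈ T.elems ∧ p.2 ∈ T.elems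

/-- Strictly increasing. -/
def StrictIncr (T : SFT) (f : Set (Ordinal × Ordinal)) : Prop :=
  ∀ {x y x' y'}, (x, y) ∈ f → (x', y') ∈ f → T.lt x x' → T.lt y y'

/-- Level preserving. -/
def LevelPres (f : Set (Ordinal × Ordinal)) : Prop :=
  ∀ p ∈ f, ht p.1 = ht p.2

/-- Downwards closed (the domain is closed under drop-downs). -/
def DownClosedDom (T : SFT) (f : Set (Ordinal × Ordinal)) : Prop :=
  ∀ x y, (x, y) ∈ f → ∀ β ∈ T.heights, β < ht x →
    ∃ x' y', x' ∈ T.elems ∧ ht x' = β ∧ T.lt x' x ∧ (x', y') ∈ f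

/-- No fixed points other than 0. -/
def NoFix (f : Set (Ordinal × Ordinal)) : Prop := ∀ x, (x, x) ∈ f → x = 0

/-- `f` is a standard function on `T`. -/
def IsStdFun (T : SFT) (f : Set (Ordinal × Ordinal)) : Prop :=
  Carr T f ∧ FuncGraph f ∧ InjGraph f ∧ StrictIncr T f ∧ LevelPres f ∧
    DownClosedDom T f ∧ NoFix f

/-- `f^m(x) = y`, for `m ∈ {-1, 1}`. -/
def appPow (f : Set (Ordinal × Ordinal)) (m : ℤ) (x y : Ordinal) : Prop :=
  (m = 1 ∧ (x, y) ∈ f) ∨ (m = -1 ∧ (y, x) ∈ f)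

/-- `X↾α` and `X` are `f`-consistent. -/
def Consistent (T : SFT) (f : Set (Ordinal × Ordinal)) (α : Ordinal) (X : Set Ordinal) : Prop :=
  ∀ x ∈ X, ∀ y ∈ X, ((T.drop α x, T.drop α y) ∈ f ↔ (x, y) ∈ f)

/-- The family `{F τ : τ ∈ A}` is separated on the tuple `a 0, ..., a (n-1)`. -/
def SepOnTuple (F : Ordinal → Set (Ordinal × Ordinal)) (A : Finset Ordinal)
    (n : ℕ) (a : ℕ → Ordinal) : Prop :=
  ∀ i < n, ∀ j₀ < i, ∀ j₁ < i, ∀ m₀ m₁ : ℤ, ∀ τ₀ ∈ A, ∀ τ₁ ∈ A,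
    (m₀ = 1 ∨ m₀ = -1) → (m₁ = 1 ∨ m₁ = -1) →
    appPow (F τ₀) m₀ (a i) (a j₀) → appPow (F τ₁) m₁ (a i) (a j₁) →
    j₀ = j₁ ∧ m₀ = m₁ ∧ τ₀ = τ₁

/-- The family is separated on the set `X`. -/
def SepOnSet (F : Ordinal → Set (Ordinal × Ordinal)) (A : Finset Ordinal)
    (X : Set Ordinal) : Prop :=
  ∃ (n : ℕ) (a : ℕ → Ordinal), (∀ i < n, ∀ j < n, a i = a j → i = j) ∧
    X = a '' {i | i < n} ∧ SepOnTuple F A n a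

/-- The family is `ρ`-separated on the tuple `a 0, ..., a (n-1)` (of elements of level `α`). -/
def RhoSepOnTuple (ρ : Ordinal → Ordinal → Ordinal) (F : Ordinal → Set (Ordinal × Ordinal))
    (A : Finset Ordinal) (α : Ordinal) (n : ℕ) (a : ℕ → Ordinal) : Prop :=
  ∀ i < n, ∀ j₀ < i, ∀ j₁ < i, ∀ m₀ m₁ : ℤ, ∀ τ₀ ∈ A, ∀ τ₁ ∈ A,
    (m₀ = 1 ∨ m₀ = -1) → (m₁ = 1 ∨ m₁ = -1) →
    appPow (F τ₀) m₀ (a i) (a j₀) → appPow (F τ₁) m₁ (a i) (a j₁) →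
    j₀ = j₁ ∧ ((m₀ = m₁ ∧ τ₀ = τ₁) ∨ α ≤ ρ τ₀ τ₁)

/-- The family is `ρ`-separated on the set `X ⊆ T_α`. -/
def RhoSepOnSet (ρ : Ordinal → Ordinal → Ordinal) (F : Ordinal → Set (Ordinal × Ordinal))
    (A : Finset Ordinal) (α : Ordinal) (X : Set Ordinal) : Prop :=
  ∃ (n : ℕ) (a : ℕ → Ordinal), (∀ i < n, ∀ j < n, a i = a j → i = j) ∧
    X = a '' {i | i < n} ∧ RhoSepOnTuple ρ F A α n a

/-- There is a loop in `X` with respect to the family `{F τ : τ ∈ A}`. -/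
def HasLoop (F : Ordinal → Set (Ordinal × Ordinal)) (A : Finset Ordinal)
    (X : Set Ordinal) : Prop :=
  ∃ p : ℕ, 4 ≤ p ∧ ∃ c : ℕ → Ordinal,
    (∀ i < p, c i ∈ X) ∧
    (∀ i < p - 1, ∀ j < p - 1, c i = c j → i = j) ∧
    c 0 = c (p - 1) ∧
    (∀ i < p - 1, ∃ τ ∈ A, ∃ m : ℤ, (m = 1 ∨ m = -1) ∧ appPow (F τ) m (c i) (c (i + 1)))

/-- `p` is a member of `T ⊗ T`. -/
def InOtimes (T : SFT) (p : Ordinal × Ordinal) : Prop :=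
  p.1 ∈ T.elems ∧ p.2 ∈ T.elems ∧ ht p.1 = ht p.2

/-- `f ⊆ T ⊗ T` is downwards closed as a subset of `T ⊗ T`. -/
def DCPairs (T : SFT) (f : Set (Ordinal × Ordinal)) : Prop :=
  ∀ p ∈ f, ∀ q, InOtimes T q → T.le q.1 p.1 → T.le q.2 p.2 → q ∈ f

/-- The downward closure of `f` in `U`. -/
def dcl (U : SFT) (f : Set (Ordinal × Ordinal)) : Set (Ordinal × Ordinal) :=
  {p | InOtimes U p ∧ ∃ q ∈ f, U.le p.1 q.1 ∧ U.le p.2 q.2}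

end AKST

/-! Let `z = a ∧_T b`. Common lower bounds of `a, b` in `U` that already lie in `T` are
below `z` in `T`. A new one, `w`, lies on a new level `α < max(ht[T])`; both `a` and `b`
reach down to the next `T`-level above `α` through elements above `w`, and these coincide
because that level has unique drop-downs to `α`. So `w` lies below a common lower bound
in `T`, hence below `z`. -/

namespace AKST
namespace SFT

lemma eq_zero_of_ht_eq_zero (T : SFT) {x : Ordinal} (hx : x ∈ T.elems) (h : ht x = 0) :
    x = 0 := by
  rcases T.mem_ok x hx with h0 | ⟨hω, -⟩
  · exact h0
  · have : (0 : Ordinal) < ht x := (Ordinal.div_pos Ordinal.omega0_ne_zero).2 hω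
    exact absurd h this.ne'

lemma zero_lt (T : SFT) {x : Ordinal} (hx : x ∈ T.elems) (hne : x ≠ 0) : T.lt 0 x := by
  have hht : 0 < ht x := pos_iff_ne_zero.2 fun h => hne (T.eq_zero_of_ht_eq_zero hx h)
  obtain ⟨y, hy, hy0, hyx⟩ := T.pred_level x hx 0 ⟨0, T.zero_mem, Ordinal.zero_div _⟩ hht
  rwa [T.eq_zero_of_ht_eq_zero hy hy0] at hyx

lemma zero_le (T : SFT) {x : Ordinal} (hx : x ∈ T.elems) : T.le 0 x := by
  by_cases h : x = 0
  · exact Or.inr ⟨h.symm, T.zero_mem⟩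
  · exact Or.inl (T.zero_lt hx h)

lemma le.mem_left {T : SFT} {x y : Ordinal} (h : T.le x y) : x ∈ T.elems :=
  h.elim (fun h => (T.lt_mem h).1) And.right

lemma le.mem_right {T : SFT} {x y : Ordinal} (h : T.le x y) : y ∈ T.elems :=
  h.elim (fun h => (T.lt_mem h).2) fun ⟨e, hx⟩ => e ▸ hx

lemma le.antisymm {T : SFT} {x y : Ordinal} (h₁ : T.le x y) (h₂ : T.le y x) : x = y := by
  rcases h₁ with h₁ | ⟨e, -⟩
  · rcases h₂ with h₂ | ⟨e, -⟩
    · exact absurd (T.lt_trans' h₁ h₂) (T.lt_irrefl' x)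
    · exact e.symm
  · exact e

lemma lt_of_lt_of_le {T : SFT} {x y z : Ordinal} (h₁ : T.lt x y) (h₂ : T.le y z) : T.lt x z :=
  h₂.elim (T.lt_trans' h₁) fun ⟨e, _⟩ => e ▸ h₁

lemma eq_of_lt_of_lt_of_ht_eq {T : SFT} {x y z : Ordinal} (hx : T.lt x z) (hy : T.lt y z)
    (hxy : ht x = ht y) : x = y := by
  rcases T.pred_linear hx hy with h | h | h
  · exact absurd (T.lt_ht h) hxy.not_lt
  · exact h
  · exact absurd (T.lt_ht h) hxy.symm.not_lt

lemma drop_eq_of_lt {T : SFT} {w x : Ordinal} (hw : w ∈ T.elems) (hwx : T.lt w x) :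
    T.drop (ht w) x = w := by
  have hex : ∃ y, y ∈ T.elems ∧ ht y = ht w ∧ T.lt y x := ⟨w, hw, rfl, hwx⟩
  rw [drop, dif_pos hex]
  exact eq_of_lt_of_lt_of_ht_eq hex.choose_spec.2.2 hwx hex.choose_spec.2.1

lemma isMeet_unique {T : SFT} {a b z z' : Ordinal} (h : T.isMeet a b z)
    (h' : T.isMeet a b z') : z = z' :=
  (h'.2.2 z h.1 h.2.1).antisymm (h.2.2 z' h'.1 h'.2.1)

lemma meet_eq_of_isMeet {T : SFT} {a b z : Ordinal} (h : T.isMeet a b z) : T.meet a b = z := by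
  have hex : ∃ z, T.isMeet a b z := ⟨z, h⟩
  rw [meet, dif_pos hex]
  exact isMeet_unique hex.choose_spec h

/-- Take the highest common lower bound: `T` is finite and the lower bounds of `a` form a
chain containing `0`. -/
lemma exists_isMeet (T : SFT) {a b : Ordinal} (ha : a ∈ T.elems) (hb : b ∈ T.elems) :
    ∃ z, T.isMeet a b z := by
  set S := T.elems.filter fun w => T.le w a ∧ T.le w b
  have h0 : (0 : Ordinal) ∈ S := Finset.mem_filter.2 ⟨T.zero_mem, T.zero_le ha, T.zero_le hb⟩
  obtain ⟨z, hzS, hzmax⟩ := S.exists_max_image ht ⟨0, h0⟩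
  obtain ⟨-, hza, hzb⟩ := Finset.mem_filter.1 hzS
  refine ⟨z, hza, hzb, fun w hwa hwb => ?_⟩
  have hwz : ht w ≤ ht z := hzmax w (Finset.mem_filter.2 ⟨hwa.mem_left, hwa, hwb⟩)
  rcases hwa with hwa | ⟨rfl, hw⟩
  · rcases hza with hza | ⟨rfl, -⟩
    · rcases T.pred_linear hwa hza with h | h | h
      · exact Or.inl h
      · exact Or.inr ⟨h, (T.lt_mem hwa).1⟩
      · exact absurd (T.lt_ht h) (not_lt.2 hwz)
    · exact Or.inl hwa
  · rcases hza with hza | ⟨rfl, -⟩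
    · exact absurd (T.lt_ht hza) (not_lt.2 hwz)
    · exact Or.inr ⟨rfl, hw⟩

lemma ht_mem_heights_of_lt (T : SFT) {x α : Ordinal} (hx : x ∈ T.elems) (h : α < ht x) :
    ht x ∈ T.heights :=
  ⟨(pos_of_gt h).ne', x, hx, rfl⟩

lemma le_maxHeight (T : SFT) {α : Ordinal} (hα : α ∈ T.heights) : α ≤ T.maxHeight := by
  have hfin : T.heights.Finite :=
    (T.elems.finite_toSet.image ht).subset fun _ ⟨_, x, hx, he⟩ => ⟨x, hx, he⟩
  exact le_csSup hfin.bddAbove hα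

lemma minAbove_mem (T : SFT) {α β : Ordinal} (hβ : β ∈ T.heights) (hαβ : α < β) :
    T.minAbove α ∈ T.heights ∧ α < T.minAbove α :=
  csInf_mem (s := {β | β ∈ T.heights ∧ α < β}) ⟨β, hβ, hαβ⟩

lemma minAbove_le (T : SFT) {α β : Ordinal} (hβ : β ∈ T.heights) (hαβ : α < β) :
    T.minAbove α ≤ β :=
  csInf_le (OrderBot.bddBelow _) ⟨hβ, hαβ⟩

namespace Ext

variable {T U : SFT}

lemma le (hTU : Ext T U) {x y : Ordinal} (h : T.le x y) : U.le x y :=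
  h.imp hTU.2 fun ⟨e, hx⟩ => ⟨e, hTU.1 hx⟩

/-- The `T`-predecessor of `b` at height `ht a` is also a `U`-predecessor, and
`U`-predecessors of `b` of a given height are unique. -/
lemma lt_iff (hTU : Ext T U) {a b : Ordinal} (ha : a ∈ T.elems) (hb : b ∈ T.elems) :
    U.lt a b ↔ T.lt a b := by
  refine ⟨fun h => ?_, hTU.2⟩
  obtain ⟨y, -, hya, hyb⟩ := T.pred_level b hb (ht a) ⟨a, ha, rfl⟩ (U.lt_ht h)
  rwa [eq_of_lt_of_lt_of_ht_eq h (hTU.2 hyb) hya.symm]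

lemma le_iff (hTU : Ext T U) {a b : Ordinal} (ha : a ∈ T.elems) (hb : b ∈ T.elems) :
    U.le a b ↔ T.le a b := by
  have haU : a ∈ U.elems := hTU.1 ha
  unfold SFT.le
  rw [hTU.lt_iff ha hb]
  simp only [ha, haU, and_true]

lemma exists_mem_level_between (hTU : Ext T U) {w x β : Ordinal} (hx : x ∈ T.elems)
    (hβ : ∃ z ∈ T.elems, ht z = β) (hwβ : ht w < β) (hβx : β ≤ ht x) (hwx : U.lt w x) :
    ∃ y ∈ T.level β, T.le y x ∧ U.lt w y := by
  rcases hβx.eq_or_lt with rfl | hβx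
  · exact ⟨x, ⟨hx, rfl⟩, Or.inr ⟨rfl, hx⟩, hwx⟩
  obtain ⟨y, hy, rfl, hyx⟩ := T.pred_level x hx β hβ hβx
  refine ⟨y, ⟨hy, rfl⟩, Or.inl hyx, ?_⟩
  rcases U.pred_linear hwx (hTU.2 hyx) with h | rfl | h
  · exact h
  · exact absurd hwβ (lt_irrefl _)
  · exact absurd (U.lt_ht h) (lt_asymm hwβ)

end Ext

namespace SimpleExt

variable {T U : SFT}

lemma exists_le_le_lt (h : SimpleExt U T) {a b w : Ordinal} (ha : a ∈ T.elems)
    (hb : b ∈ T.elems) (hwT : w ∉ T.elems) (hwa : U.lt w a) (hwb : U.lt w b) :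
    ∃ c, T.le c a ∧ T.le c b ∧ U.lt w c := by
  obtain ⟨hTU, hnew, huniq⟩ := h
  have hwU : w ∈ U.elems := (U.lt_mem hwa).1
  have hwα : ht w ∈ U.heights :=
    ⟨fun e => hwT (U.eq_zero_of_ht_eq_zero hwU e ▸ T.zero_mem), w, hwU, rfl⟩
  have hαa := U.lt_ht hwa
  have hαb := U.lt_ht hwb
  have hha := T.ht_mem_heights_of_lt ha hαa
  have hhb := T.ht_mem_heights_of_lt hb hαb
  set β := T.minAbove (ht w)
  obtain ⟨⟨-, hβ⟩, hαβ⟩ := T.minAbove_mem hha hαa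
  obtain ⟨a', ha', ha'a, hwa'⟩ :=
    hTU.exists_mem_level_between ha hβ hαβ (T.minAbove_le hha hαa) hwa
  obtain ⟨b', hb', hb'b, hwb'⟩ :=
    hTU.exists_mem_level_between hb hβ hαβ (T.minAbove_le hhb hαb) hwb
  have hUD := huniq (ht w) hwα (hnew w hwU hwT) (hαa.trans_le (T.le_maxHeight hha))
  have hab : a' = b' :=
    hUD a' ha' b' hb' ((drop_eq_of_lt hwU hwa').trans (drop_eq_of_lt hwU hwb').symm)
  exact ⟨a', ha'a, hab ▸ hb'b, hwa'⟩

lemma isMeet (h : SimpleExt U T) {a b z : Ordinal} (hz : T.isMeet a b z) :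
    U.isMeet a b z := by
  have hTU : Ext T U := h.1
  have ha := hz.1.mem_right
  have hb := hz.2.1.mem_right
  refine ⟨hTU.le hz.1, hTU.le hz.2.1, fun w hwa hwb => ?_⟩
  by_cases hwT : w ∈ T.elems
  · rw [hTU.le_iff hwT ha] at hwa
    rw [hTU.le_iff hwT hb] at hwb
    exact hTU.le (hz.2.2 w hwa hwb)
  · have hwa' : U.lt w a := hwa.resolve_right fun ⟨e, _⟩ => hwT (e ▸ ha)
    have hwb' : U.lt w b := hwb.resolve_right fun ⟨e, _⟩ => hwT (e ▸ hb)
    obtain ⟨c, hca, hcb, hwc⟩ := h.exists_le_le_lt ha hb hwT hwa' hwb'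
    exact Or.inl (lt_of_lt_of_le hwc (hTU.le (hz.2.2 c hca hcb)))

end SimpleExt

end SFT
end AKST

open AKST AKST.SFT

/-- If `U` is a simple extension of `T`, then meets of elements of `T`
computed in `T` and in `U` coincide. -/
theorem stmt_2 (T U : SFT) (h : SimpleExt U T) :
    ∀ a ∈ T.elems, ∀ b ∈ T.elems, T.meet a b = U.meet a b := by
  intro a ha b hb
  obtain ⟨z, hz⟩ := T.exists_isMeet ha hb
  rw [meet_eq_of_isMeet hz, meet_eq_of_isMeet (h.isMeet hz)]
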